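/- There exists a topological semilattice E which is countable, locally compact, Lawson, and metrizable, but is not metrizable by a subinvariant metric and is not precompact. In fact, E = {0} ∪ {1/n : n ∈ ℕ} with the operation min, topologized so that all non-zero points are isolated and the sets B_n = {0} ∪ {1/(2k) : k ≥ n}, n ∈ ℕ, form a neighborhood base at 0, has these properties. -/
import Mathlib


open Topology TopologicalSpace

/-- The carrier of the example: `E = {0} ∪ {1/n : n ∈ ℕ, n ≥ 1} ⊆ ℝ`. -/
def ExSet : Set ℝ := {x : ℝ | x = 0 ∨ ∃ n : ℕ, 0 < n ∧ x = 1 / (n : ℝ)}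

/-- The example semilattice `E = {0} ∪ {1/n : n ∈ ℕ}` with the operation `min`. -/
def ExSemilattice : Type := ↥ExSet

noncomputable instance : LinearOrder ExSemilattice :=
  inferInstanceAs (LinearOrder ↥ExSet)

/-- The basic neighborhoods of `0`: `B n = {0} ∪ {1/(2k) : k ≥ n}`. -/
def ExB (n : ℕ) : Set ExSemilattice :=
  {x : ExSemilattice | Subtype.val x = 0 ∨ ∃ k : ℕ, n ≤ k ∧ Subtype.val x = 1 / (2 * k : ℝ)}

/-- The topology on `E` in which all non-zero points are isolated and the sets
`B n = {0} ∪ {1/(2k) : k ≥ n}`, `n ∈ ℕ`, form a neighborhood base at `0`. -/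
instance : TopologicalSpace ExSemilattice :=
  TopologicalSpace.generateFrom
    ({U : Set ExSemilattice | ∃ x : ExSemilattice, Subtype.val x ≠ 0 ∧ U = {x}} ∪
      {U : Set ExSemilattice | ∃ n : ℕ, 0 < n ∧ U = ExB n})

/-- The semigroup operation on `E` is `min`. -/
noncomputable instance : Semigroup ExSemilattice where
  mul := min
  mul_assoc := min_assoc

/-- A topological semigroup `S` is *precompact* if there is a semigroup homomorphism
from `S` to a compact topological semigroup which is a topological embedding. -/
def IsPrecompactSemigroup (S : Type) [Semigroup S] [TopologicalSpace S] : Prop :=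
  ∃ (K : Type) (_ : Semigroup K) (_ : TopologicalSpace K),
    T2Space K ∧ CompactSpace K ∧ ContinuousMul K ∧
    ∃ f : S → K, (∀ a b : S, f (a * b) = f a * f b) ∧ IsEmbedding f

/-- `d` is a metric on `X` generating its topology. -/
def IsCompatibleMetric {X : Type} [TopologicalSpace X] (d : X → X → ℝ) : Prop :=
  (∀ x y : X, d x y = 0 ↔ x = y) ∧ (∀ x y : X, d x y = d y x) ∧
  (∀ x y z : X, d x z ≤ d x y + d y z) ∧
  (∀ s : Set X, IsOpen s ↔ ∀ x ∈ s, ∃ ε > 0, {y : X | d x y < ε} ⊆ s)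

namespace ExAux
abbrev E := ExSemilattice
def zeroE : E := ⟨0, Or.inl rfl⟩

lemma mul_def (a b : E) : a * b = min a b := rfl
lemma val_le_iff {a b : E} : a ≤ b ↔ a.val ≤ b.val := Iff.rfl
lemma eq_zeroE {x : E} (h : x.val = 0) : x = zeroE := Subtype.ext h

lemma val_nonneg (x : E) : 0 ≤ x.val := by
  rcases x.property with h | ⟨n, hn, h⟩ <;> rw [h]
  · positivity

lemma zeroE_le (x : E) : zeroE ≤ x := val_le_iff.2 (val_nonneg x)

lemma isOpen_singleton {x : E} (hx : x.val ≠ 0) : IsOpen ({x} : Set E) :=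
  TopologicalSpace.GenerateOpen.basic _ (Or.inl ⟨x, hx, rfl⟩)

lemma isOpen_B {n : ℕ} (hn : 0 < n) : IsOpen (ExB n) :=
  TopologicalSpace.GenerateOpen.basic _ (Or.inr ⟨n, hn, rfl⟩)

lemma zeroE_mem_B (n : ℕ) : zeroE ∈ ExB n := Or.inl rfl

lemma B_antitone {n m : ℕ} (h : n ≤ m) : ExB m ⊆ ExB n := by
  rintro x (hx | ⟨k, hk, hx⟩)
  · exact Or.inl hx
  · exact Or.inr ⟨k, h.trans hk, hx⟩

lemma min_mem_B {n : ℕ} {x y : E} (hx : x ∈ ExB n) (hy : y ∈ ExB n) : min x y ∈ ExB n := by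
  rcases min_cases x y with ⟨h, _⟩ | ⟨h, _⟩ <;> rw [h] <;> assumption

lemma exists_B_subset {U : Set E} (hU : IsOpen U) (h0 : zeroE ∈ U) :
    ∃ n : ℕ, 0 < n ∧ ExB n ⊆ U := by
  induction hU with
  | basic s hs =>
    rcases hs with ⟨x, hx, rfl⟩ | ⟨n, hn, rfl⟩
    · have : x = zeroE := h0.symm
      exact absurd (this ▸ rfl) hx
    · exact ⟨n, hn, subset_rfl⟩
  | univ => exact ⟨1, one_pos, fun _ _ => trivial⟩
  | inter s t _ _ ihs iht =>
    obtain ⟨n, hn, hns⟩ := ihs h0.1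
    obtain ⟨m, hm, hmt⟩ := iht h0.2
    exact ⟨max n m, lt_of_lt_of_le hn (le_max_left _ _),
      fun x hx => ⟨hns (B_antitone (le_max_left _ _) hx), hmt (B_antitone (le_max_right _ _) hx)⟩⟩
  | sUnion S hS ih =>
    obtain ⟨s, hs, h0s⟩ := h0
    obtain ⟨n, hn, hns⟩ := ih s hs h0s
    exact ⟨n, hn, hns.trans (Set.subset_sUnion_of_mem hs)⟩

lemma odd_ne_even (k j : ℕ) : (1:ℝ)/(2*k+1) ≠ 1/(2*j) := by
  intro h
  have hk' : (0:ℝ) < 2*k+1 := by positivity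
  rcases Nat.eq_zero_or_pos j with rfl | hj
  · norm_num at h
    exact absurd h (ne_of_gt hk')
  · have hj' : (0:ℝ) < (j:ℝ) := by exact_mod_cast hj
    field_simp at h
    have : (2*j : ℕ) = 2*k+1 := by exact_mod_cast h
    omega

lemma one_div_nat_inj {a b : ℕ} (ha : 0 < a) (hb : 0 < b) (h : (1:ℝ)/a = 1/b) : a = b := by
  have ha' : (0:ℝ) < a := by exact_mod_cast ha
  have hb' : (0:ℝ) < b := by exact_mod_cast hb
  field_simp at h
  exact_mod_cast h.symm

lemma tri (x : E) :
    x = zeroE ∨ (∃ k : ℕ, 0 < k ∧ x.val = 1/(2*k : ℝ)) ∨ (∃ k : ℕ, x.val = 1/(2*k+1 : ℝ)) := by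
  rcases x.property with h | ⟨n, hn, h⟩
  · exact Or.inl (eq_zeroE h)
  · rcases Nat.even_or_odd n with ⟨k, hk⟩ | ⟨k, hk⟩
    · refine Or.inr (Or.inl ⟨k, by omega, ?_⟩)
      rw [h, hk]; push_cast; ring_nf
    · refine Or.inr (Or.inr ⟨k, ?_⟩)
      rw [h, hk]; push_cast; ring_nf

/-- Concrete even and odd points. -/
noncomputable def evenE (n : ℕ) (hn : 0 < n) : E :=
  ⟨1/(2*n : ℝ), Or.inr ⟨2*n, by omega, by push_cast; ring_nf⟩⟩
noncomputable def oddE (n : ℕ) : E := ⟨1/(2*n+1 : ℝ), Or.inr ⟨2*n+1, by omega, by push_cast; ring_nf⟩⟩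

lemma evenE_mem_B {m n : ℕ} (hn : 0 < n) (h : m ≤ n) : evenE n hn ∈ ExB m := Or.inr ⟨n, h, rfl⟩

lemma oddE_notMem_B (k : ℕ) (n : ℕ) : oddE k ∉ ExB n := by
  rintro (h | ⟨j, hj, h⟩)
  · have : (0:ℝ) < 2*k+1 := by positivity
    simp only [oddE] at h
    rw [div_eq_iff (ne_of_gt this)] at h
    norm_num at h
  · exact odd_ne_even k j h

/-- Separation of a nonzero point from `0`. -/
lemma exists_B_notMem {y : E} (hy : y.val ≠ 0) : ∃ n : ℕ, 0 < n ∧ y ∉ ExB n := by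
  rcases tri y with rfl | ⟨k, hk, hyv⟩ | ⟨k, hyv⟩
  · exact absurd rfl hy
  · refine ⟨k+1, by omega, ?_⟩
    rintro (h | ⟨j, hj, h⟩)
    · exact hy h
    · have := one_div_nat_inj (by omega : 0 < 2*k) (by omega : 0 < 2*j)
        (by push_cast; rw [← hyv, ← h])
      omega
  · refine ⟨1, one_pos, ?_⟩
    rintro (h | ⟨j, hj, h⟩)
    · exact hy h
    · exact odd_ne_even k j (hyv.symm.trans h)

open Classical in
noncomputable def fE (x : E) : ℝ :=
  if ∃ k : ℕ, x.val = 1/(2*k+1 : ℝ) then 1 / x.val else x.val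

lemma fE_zero : fE zeroE = 0 := by
  rw [fE, if_neg]
  · rfl
  · rintro ⟨k, hk⟩
    have : (0:ℝ) < 2*k+1 := by positivity
    simp only [zeroE] at hk
    rw [eq_comm, div_eq_iff (ne_of_gt this)] at hk
    norm_num at hk

lemma fE_even {x : E} {k : ℕ} (h : x.val = 1/(2*k : ℝ)) : fE x = 1/(2*k : ℝ) := by
  rw [fE, if_neg, h]
  rintro ⟨j, hj⟩
  exact odd_ne_even j k (hj.symm.trans h)

lemma fE_odd {x : E} {k : ℕ} (h : x.val = 1/(2*k+1 : ℝ)) : fE x = 2*k+1 := by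
  rw [fE, if_pos ⟨k, h⟩, h, one_div_one_div]

lemma fE_nonneg (x : E) : 0 ≤ fE x := by
  rcases tri x with rfl | ⟨k, hk, h⟩ | ⟨k, h⟩
  · rw [fE_zero]
  · rw [fE_even h]; positivity
  · rw [fE_odd h]; positivity

lemma isolated {x : E} (hx : x.val ≠ 0) :
    ∃ ε > 0, ∀ y : E, |fE x - fE y| < ε → y = x := by
  rcases tri x with rfl | ⟨k, hk, hxv⟩ | ⟨k, hxv⟩
  · exact absurd rfl hx
  · have hk1 : (1:ℝ) ≤ k := by exact_mod_cast hk
    have hfx : fE x = 1/(2*k : ℝ) := fE_even hxv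
    have hε : (0:ℝ) < 1/(2*k) - 1/(2*k+2) := by
      rw [sub_pos]
      apply one_div_lt_one_div_of_lt <;> linarith
    refine ⟨1/(2*k) - 1/(2*k+2), hε, fun y hy => ?_⟩
    rcases tri y with rfl | ⟨j, hj, hyv⟩ | ⟨j, hyv⟩
    · rw [hfx, fE_zero, sub_zero, abs_of_pos (by positivity)] at hy
      have : (0:ℝ) < 1/(2*k+2) := by positivity
      linarith
    · have hj1 : (1:ℝ) ≤ j := by exact_mod_cast hj
      rcases eq_or_ne j k with rfl | hjk
      · exact Subtype.ext (hyv.trans hxv.symm)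
      · exfalso
        rw [hfx, fE_even hyv] at hy
        rcases lt_or_gt_of_ne hjk with hlt | hgt
        · have hjk' : (j:ℝ) + 1 ≤ k := by exact_mod_cast hlt
          have key : 1/(2*(k:ℝ)) - 1/(2*k+2) ≤ 1/(2*(j:ℝ)) - 1/(2*k) := by
            have h1 : (0:ℝ) < 2*(j:ℝ) := by linarith
            have h2 : (0:ℝ) < 2*(k:ℝ) := by linarith
            have h3 : (0:ℝ) < 2*(k:ℝ)+2 := by linarith
            rw [div_sub_div _ _ (ne_of_gt h2) (ne_of_gt h3),
              div_sub_div _ _ (ne_of_gt h1) (ne_of_gt h2),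
              div_le_div_iff₀ (by positivity) (by positivity)]
            nlinarith [mul_pos h1 h2, mul_pos h2 h3, mul_pos (mul_pos h1 h2) h3]
          have := neg_abs_le (1/(2*(k:ℝ)) - 1/(2*j))
          have habs := abs_lt.1 hy
          linarith
        · have hjk' : (k:ℝ) + 1 ≤ j := by exact_mod_cast hgt
          have : 1/(2*(j:ℝ)) ≤ 1/(2*(k:ℝ)+2) :=
            one_div_le_one_div_of_le (by linarith) (by linarith)
          have habs := abs_lt.1 hy
          linarith
    · exfalso
      have hj0 : (0:ℝ) ≤ j := by positivity
      rw [hfx, fE_odd hyv] at hy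
      have h12 : 1/(2*(k:ℝ)) ≤ 1/2 := one_div_le_one_div_of_le (by norm_num) (by linarith)
      have habs := abs_lt.1 hy
      have : (0:ℝ) < 1/(2*k+2) := by positivity
      linarith
  · have hfx : fE x = 2*(k:ℝ)+1 := fE_odd hxv
    have hk0 : (0:ℝ) ≤ k := by positivity
    refine ⟨1/2, by norm_num, fun y hy => ?_⟩
    rcases tri y with rfl | ⟨j, hj, hyv⟩ | ⟨j, hyv⟩
    · exfalso
      rw [hfx, fE_zero, sub_zero] at hy
      have := abs_lt.1 hy
      linarith
    · exfalso
      have hj1 : (1:ℝ) ≤ j := by exact_mod_cast hj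
      rw [hfx, fE_even hyv] at hy
      have h12 : 1/(2*(j:ℝ)) ≤ 1/2 := one_div_le_one_div_of_le (by norm_num) (by linarith)
      have h0 : (0:ℝ) < 1/(2*j) := by positivity
      have := abs_lt.1 hy
      linarith
    · rw [hfx, fE_odd hyv] at hy
      have habs := abs_lt.1 hy
      have hkj : k = j := by
        have hj0 : (0:ℝ) ≤ j := by positivity
        have h1 : k ≤ j := by
          by_contra hlt
          push_neg at hlt
          have : (j:ℝ) + 1 ≤ k := by exact_mod_cast hlt
          linarith
        have h2 : j ≤ k := by
          by_contra hlt
          push_neg at hlt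
          have : (k:ℝ) + 1 ≤ j := by exact_mod_cast hlt
          linarith
        omega
      exact Subtype.ext (hyv.trans (hkj ▸ hxv).symm)

noncomputable def dE (x y : E) : ℝ := |fE x - fE y|

/-- the ball around `zeroE` of radius `1/(2n)` is inside `ExB n`. -/
lemma ball_zero_subset {n : ℕ} (hn : 0 < n) :
    {y : E | dE zeroE y < 1/(2*n : ℝ)} ⊆ ExB n := by
  intro z hz
  have hn1 : (1:ℝ) ≤ n := by exact_mod_cast hn
  simp only [dE, fE_zero, zero_sub, abs_neg, abs_of_nonneg (fE_nonneg z), Set.mem_setOf_eq] at hz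
  rcases tri z with rfl | ⟨j, hj, hzv⟩ | ⟨j, hzv⟩
  · exact zeroE_mem_B n
  · rw [fE_even hzv] at hz
    have hj' : (0:ℝ) < 2*(j:ℝ) := by
      have : (1:ℝ) ≤ j := by exact_mod_cast hj
      linarith
    have : (2*(n:ℝ)) < 2*j := lt_of_one_div_lt_one_div hj' hz
    have hnj : n ≤ j := by
      have : (n:ℝ) < j := by linarith
      exact_mod_cast this.le
    exact Or.inr ⟨j, hnj, hzv⟩
  · exfalso
    rw [fE_odd hzv] at hz
    have hj0 : (0:ℝ) ≤ j := by positivity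
    have : 1/(2*(n:ℝ)) ≤ 1/2 := one_div_le_one_div_of_le (by norm_num) (by linarith)
    linarith

lemma dE_compatible : IsCompatibleMetric dE := by
  refine ⟨?_, ?_, ?_, ?_⟩
  · intro x y
    constructor
    · intro h
      have hfe : fE x = fE y := by
        have := abs_eq_zero.1 h
        linarith [sub_eq_zero.1 this]
      by_cases hx : x.val = 0
      · by_cases hy : y.val = 0
        · exact (eq_zeroE hx).trans (eq_zeroE hy).symm
        · obtain ⟨ε, hε, hiso⟩ := isolated hy
          exact hiso x (by rw [hfe, sub_self, abs_zero]; exact hε)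
      · obtain ⟨ε, hε, hiso⟩ := isolated hx
        exact (hiso y (by rw [hfe, sub_self, abs_zero]; exact hε)).symm
    · rintro rfl
      simp [dE]
  · intro x y
    exact abs_sub_comm _ _
  · intro x y z
    exact abs_sub_le _ _ _
  · intro s
    constructor
    · intro hs
      induction hs with
      | basic u hu =>
        rcases hu with ⟨x, hx, rfl⟩ | ⟨n, hn, rfl⟩
        · intro y hy
          obtain ⟨ε, hε, hiso⟩ := isolated hx
          rcases hy with rfl
          exact ⟨ε, hε, fun z hz => hiso z hz⟩
        · intro x hx
          by_cases hx0 : x.val = 0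
          · rcases eq_zeroE hx0
            exact ⟨1/(2*n : ℝ), by positivity, ball_zero_subset hn⟩
          · obtain ⟨ε, hε, hiso⟩ := isolated hx0
            exact ⟨ε, hε, fun z hz => (hiso z hz) ▸ hx⟩
      | univ => exact fun x _ => ⟨1, one_pos, fun _ _ => trivial⟩
      | inter u v _ _ ihu ihv =>
        intro x hx
        obtain ⟨ε₁, hε₁, h₁⟩ := ihu x hx.1
        obtain ⟨ε₂, hε₂, h₂⟩ := ihv x hx.2
        refine ⟨min ε₁ ε₂, lt_min hε₁ hε₂, fun z hz => ?_⟩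
        have hz' : dE x z < min ε₁ ε₂ := hz
        exact ⟨h₁ (show dE x z < ε₁ from lt_of_lt_of_le hz' (min_le_left _ _)),
          h₂ (show dE x z < ε₂ from lt_of_lt_of_le hz' (min_le_right _ _))⟩
      | sUnion S hS ih =>
        rintro x ⟨u, hu, hxu⟩
        obtain ⟨ε, hε, h⟩ := ih u hu x hxu
        exact ⟨ε, hε, h.trans (Set.subset_sUnion_of_mem hu)⟩
    · intro h
      rw [isOpen_iff_forall_mem_open]
      intro x hx
      by_cases hx0 : x.val = 0
      · rcases eq_zeroE hx0
        obtain ⟨ε, hε, hball⟩ := h _ hx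
        obtain ⟨n, hn⟩ := exists_nat_one_div_lt hε
        refine ⟨ExB (n+1), ?_, isOpen_B (by omega), zeroE_mem_B (n+1)⟩
        intro z hz
        apply hball
        have hz' : fE z ≤ 1/(2*((n:ℝ)+1)) := by
          rcases hz with hz0 | ⟨j, hj, hzv⟩
          · rw [(eq_zeroE hz0 : z = zeroE), fE_zero]; positivity
          · rw [fE_even hzv]
            have hj' : ((n:ℝ)+1) ≤ j := by exact_mod_cast hj
            exact one_div_le_one_div_of_le (by positivity) (by linarith)
        have h2 : 1/(2*((n:ℝ)+1)) ≤ 1/((n:ℝ)+1) := by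
          apply one_div_le_one_div_of_le (by positivity) (by linarith [Nat.cast_nonneg (α := ℝ) n])
        simp only [dE, fE_zero, zero_sub, abs_neg, abs_of_nonneg (fE_nonneg z), Set.mem_setOf_eq]
        linarith
      · exact ⟨{x}, by simpa using hx, isOpen_singleton hx0, rfl⟩

lemma B_diff_finite (m n : ℕ) : (ExB m \ ExB n).Finite := by
  have hsub : (ExB m \ ExB n) ⊆ Subtype.val ⁻¹' ((fun k : ℕ => 1/(2*k : ℝ)) '' Set.Ico m n) := by
    rintro z ⟨hz, hzn⟩
    rcases hz with hz0 | ⟨k, hk, hzv⟩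
    · exact absurd (Or.inl hz0) hzn
    · have hkn : k < n := by
        by_contra hge
        exact hzn (Or.inr ⟨k, le_of_not_gt hge, hzv⟩)
      exact ⟨k, ⟨hk, hkn⟩, hzv.symm⟩
  exact Set.Finite.subset (((Set.finite_Ico m n).image _).preimage
    (Set.injOn_of_injective Subtype.val_injective)) hsub

lemma isCompact_B (m : ℕ) : IsCompact (ExB m) := by
  rw [isCompact_iff_ultrafilter_le_nhds]
  intro F hF
  by_cases hpure : ∃ x ∈ ExB m, {x} ∈ F
  · obtain ⟨x, hxB, hxF⟩ := hpure
    exact ⟨x, hxB, le_trans (Filter.le_pure_iff.2 hxF) (pure_le_nhds x)⟩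
  · push_neg at hpure
    refine ⟨zeroE, zeroE_mem_B m, fun U hU => ?_⟩
    obtain ⟨V, hVU, hVopen, hV0⟩ := mem_nhds_iff.1 hU
    obtain ⟨n, hn, hBn⟩ := exists_B_subset hVopen hV0
    have hD : (ExB m \ ExB n) ∉ F := by
      intro hDF
      obtain ⟨x, hxD, hFpure⟩ := Ultrafilter.eq_pure_of_finite_mem (B_diff_finite m n) hDF
      exact hpure x hxD.1 (by rw [hFpure]; exact rfl)
    have hDc : (ExB m \ ExB n)ᶜ ∈ F := Ultrafilter.compl_mem_iff_notMem.2 hD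
    have hBm : ExB m ∈ F := Filter.le_principal_iff.1 hF
    refine Filter.mem_of_superset (Filter.inter_mem hBm hDc) ?_
    rintro z ⟨hzm, hznd⟩
    rcases Classical.em (z ∈ ExB n) with hz | hz
    · exact hVU (hBn hz)
    · exact absurd ⟨hzm, hz⟩ hznd

instance : LocallyCompactSpace E := by
  constructor
  intro x U hU
  by_cases hx0 : x.val = 0
  · rcases eq_zeroE hx0
    obtain ⟨V, hVU, hVopen, hV0⟩ := mem_nhds_iff.1 hU
    obtain ⟨n, hn, hBn⟩ := exists_B_subset hVopen hV0
    exact ⟨ExB n, (isOpen_B hn).mem_nhds (zeroE_mem_B n), (hBn.trans hVU), isCompact_B n⟩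
  · exact ⟨{x}, (isOpen_singleton hx0).mem_nhds rfl,
      Set.singleton_subset_iff.2 (mem_of_mem_nhds hU), isCompact_singleton⟩

lemma sep_zero {y : E} (hy : y.val ≠ 0) :
    ∃ u v : Set E, IsOpen u ∧ IsOpen v ∧ zeroE ∈ u ∧ y ∈ v ∧ Disjoint u v := by
  obtain ⟨n, hn, hyn⟩ := exists_B_notMem hy
  refine ⟨ExB n, {y}, isOpen_B hn, isOpen_singleton hy, zeroE_mem_B n, rfl, ?_⟩
  rw [Set.disjoint_singleton_right]
  exact hyn

instance : T2Space E := by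
  constructor
  intro x y hxy
  by_cases hx0 : x.val = 0
  · rcases eq_zeroE hx0
    have hy0 : y.val ≠ 0 := fun h => hxy (eq_zeroE h).symm
    exact sep_zero hy0
  · by_cases hy0 : y.val = 0
    · rcases eq_zeroE hy0
      obtain ⟨u, v, hu, hv, h0u, hxv, hd⟩ := sep_zero hx0
      exact ⟨v, u, hv, hu, hxv, h0u, hd.symm⟩
    · refine ⟨{x}, {y}, isOpen_singleton hx0, isOpen_singleton hy0, rfl, rfl, ?_⟩
      rw [Set.disjoint_singleton_right]
      exact fun h => hxy (Set.mem_singleton_iff.1 h).symm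

lemma continuous_min : Continuous (fun p : E × E => p.1 * p.2) := by
  rw [continuous_iff_continuousAt]
  rintro ⟨a, b⟩
  intro U hU
  obtain ⟨V, hVU, hVopen, hV⟩ := mem_nhds_iff.1 hU
  have hV' : a * b ∈ V := hV
  rw [Filter.mem_map, nhds_prod_eq]
  by_cases ha0 : a.val = 0
  · rcases eq_zeroE ha0
    by_cases hb0 : b.val = 0
    · rcases eq_zeroE hb0
      have hmm : zeroE * zeroE = zeroE := min_self zeroE
      obtain ⟨n, hn, hBn⟩ := exists_B_subset hVopen (by rwa [hmm] at hV')
      refine Filter.mem_of_superset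
        (Filter.prod_mem_prod ((isOpen_B hn).mem_nhds (zeroE_mem_B n))
          ((isOpen_B hn).mem_nhds (zeroE_mem_B n))) ?_
      rintro ⟨u, v⟩ ⟨hu, hv⟩
      exact hVU (hBn (min_mem_B hu hv))
    · -- a = 0, b ≠ 0 : product is 0
      have hmm : zeroE * b = zeroE := min_eq_left (zeroE_le b)
      obtain ⟨n, hn, hBn⟩ := exists_B_subset hVopen (by rwa [hmm] at hV')
      obtain ⟨m, hm, hbv⟩ : ∃ m : ℕ, 0 < m ∧ b.val = 1/(m:ℝ) := by
        rcases b.property with h | h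
        · exact absurd h hb0
        · exact h
      refine Filter.mem_of_superset
        (Filter.prod_mem_prod ((isOpen_B (by omega : 0 < max n m)).mem_nhds
          (zeroE_mem_B (max n m))) ((isOpen_singleton hb0).mem_nhds rfl)) ?_
      rintro ⟨u, v⟩ ⟨hu, hv⟩
      obtain rfl : v = b := hv
      show u * v ∈ U
      apply hVU
      rcases hu with hu0 | ⟨k, hk, huv⟩
      · rw [eq_zeroE (show u.val = 0 from hu0), show zeroE * v = zeroE from min_eq_left (zeroE_le v)]
        exact hBn (zeroE_mem_B n)
      · have huvle : u ≤ v := by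
          rw [val_le_iff, huv, hbv]
          apply one_div_le_one_div_of_le
          · exact_mod_cast hm
          · have h1 : m ≤ k := le_trans (le_max_right n m) hk
            have : (m:ℝ) ≤ k := by exact_mod_cast h1
            linarith
        rw [show u * v = u from min_eq_left huvle]
        exact hBn (B_antitone (le_max_left n m) (Or.inr ⟨k, hk, huv⟩))
  · by_cases hb0 : b.val = 0
    · rcases eq_zeroE hb0
      have hmm : a * zeroE = zeroE := min_eq_right (zeroE_le a)
      obtain ⟨n, hn, hBn⟩ := exists_B_subset hVopen (by rwa [hmm] at hV')
      obtain ⟨m, hm, hav⟩ : ∃ m : ℕ, 0 < m ∧ a.val = 1/(m:ℝ) := by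
        rcases a.property with h | h
        · exact absurd h ha0
        · exact h
      refine Filter.mem_of_superset
        (Filter.prod_mem_prod ((isOpen_singleton ha0).mem_nhds rfl)
          ((isOpen_B (by omega : 0 < max n m)).mem_nhds (zeroE_mem_B (max n m)))) ?_
      rintro ⟨u, v⟩ ⟨hu, hv⟩
      obtain rfl : u = a := hu
      show u * v ∈ U
      apply hVU
      rcases hv with hv0 | ⟨k, hk, hvv⟩
      · rw [eq_zeroE (show v.val = 0 from hv0), show u * zeroE = zeroE from min_eq_right (zeroE_le u)]
        exact hBn (zeroE_mem_B n)
      · have hvule : v ≤ u := by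
          rw [val_le_iff, hvv, hav]
          apply one_div_le_one_div_of_le
          · exact_mod_cast hm
          · have h1 : m ≤ k := le_trans (le_max_right n m) hk
            have : (m:ℝ) ≤ k := by exact_mod_cast h1
            linarith
        rw [show u * v = v from min_eq_right hvule]
        exact hBn (B_antitone (le_max_left n m) (Or.inr ⟨k, hk, hvv⟩))
    · refine Filter.mem_of_superset
        (Filter.prod_mem_prod ((isOpen_singleton ha0).mem_nhds rfl)
          ((isOpen_singleton hb0).mem_nhds rfl)) ?_
      rintro ⟨u, v⟩ ⟨hu, hv⟩
      obtain rfl : u = a := hu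
      obtain rfl : v = b := hv
      exact hVU hV'

lemma countableE : Countable E := by
  have hbig : (insert (0:ℝ) (Set.range fun n : ℕ => 1/(n:ℝ))).Countable :=
    (Set.countable_range _).insert 0
  have hsub : ExSet ⊆ insert (0:ℝ) (Set.range fun n : ℕ => 1/(n:ℝ)) := by
    rintro x (rfl | ⟨n, hn, rfl⟩)
    · exact Set.mem_insert _ _
    · exact Set.mem_insert_of_mem _ ⟨n, rfl⟩
  exact (hbig.mono hsub).to_subtype

lemma not_subinvariant :
    ¬ ∃ d : E → E → ℝ, IsCompatibleMetric d ∧ ∀ x y z : E, d (z * x) (z * y) ≤ d x y := by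
  rintro ⟨d, ⟨hzero, hsymm, htri, hopen⟩, hsub⟩
  have ball_open : ∀ (x : E) (ε : ℝ), IsOpen {y | d x y < ε} := by
    intro x ε
    rw [hopen]
    intro y hy
    have hy' : d x y < ε := hy
    refine ⟨ε - d x y, by linarith, fun z hz => ?_⟩
    have hz' : d y z < ε - d x y := hz
    exact show d x z < ε from lt_of_le_of_lt (htri x y z) (by linarith)
  obtain ⟨ε, hε, hball⟩ := (hopen (ExB 1)).1 (isOpen_B one_pos) zeroE (zeroE_mem_B 1)
  obtain ⟨n, hn, hBn⟩ := exists_B_subset (ball_open zeroE ε)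
    (show d zeroE zeroE < ε from by rw [(hzero _ _).2 rfl]; exact hε)
  have heven : d zeroE (evenE n hn) < ε := hBn (evenE_mem_B hn le_rfl)
  have hkey : d zeroE (oddE n) < ε := by
    have h1 := hsub zeroE (evenE n hn) (oddE n)
    have hn1 : (1:ℝ) ≤ n := by exact_mod_cast hn
    have h2 : oddE n * zeroE = zeroE := min_eq_right (zeroE_le _)
    have h3 : oddE n * evenE n hn = oddE n := by
      apply min_eq_left
      rw [val_le_iff]
      show (1:ℝ)/(2*n+1) ≤ 1/(2*n)
      apply one_div_le_one_div_of_le <;> linarith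
    rw [h2, h3] at h1
    exact lt_of_le_of_lt h1 heven
  exact oddE_notMem_B n 1 (hball hkey)

lemma not_precompact : ¬ IsPrecompactSemigroup ExSemilattice := by
  rintro ⟨K, iS, iT, hT2, hC, hM, f, hhom, hemb⟩
  letI := iS; letI := iT
  haveI := hT2; haveI := hC; haveI := hM
  set a : ℕ → E := fun k => oddE (k+1) with ha
  set b : ℕ → E := fun k => evenE (k+1) (Nat.succ_pos k) with hb
  have hab : ∀ k, a k * b k = a k := by
    intro k
    apply min_eq_left
    rw [val_le_iff]
    show (1:ℝ)/(2*(k+1:ℕ)+1) ≤ 1/(2*(k+1:ℕ))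
    have hk1 : (1:ℝ) ≤ (k+1:ℕ) := by exact_mod_cast Nat.succ_le_succ (Nat.zero_le k)
    apply one_div_le_one_div_of_le <;> linarith
  have haz : ∀ k, a k * zeroE = zeroE := fun k => min_eq_right (zeroE_le _)
  have hbtend : Filter.Tendsto b Filter.atTop (𝓝 zeroE) := by
    intro U hU
    obtain ⟨V, hVU, hVopen, hV0⟩ := mem_nhds_iff.1 hU
    obtain ⟨n, hn, hBn⟩ := exists_B_subset hVopen hV0
    rw [Filter.mem_map]
    filter_upwards [Filter.eventually_ge_atTop n] with k hk
    exact hVU (hBn (evenE_mem_B _ (by omega)))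
  set F := Ultrafilter.of (Filter.atTop : Filter ℕ) with hF
  have hFle : (F : Filter ℕ) ≤ Filter.atTop := Ultrafilter.of_le _
  obtain ⟨p, -, hp⟩ := isCompact_univ.ultrafilter_le_nhds (F.map fun k => f (a k)) (by simp)
  have hpa : Filter.Tendsto (fun k => f (a k)) (F : Filter ℕ) (𝓝 p) := hp
  have hfb : Filter.Tendsto (fun k => f (b k)) (F : Filter ℕ) (𝓝 (f zeroE)) :=
    ((hemb.continuous.tendsto zeroE).comp hbtend).mono_left hFle
  have hmul1 : Filter.Tendsto (fun k => f (a k) * f (b k)) (F : Filter ℕ) (𝓝 (p * f zeroE)) :=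
    hpa.mul hfb
  have heq1 : (fun k => f (a k) * f (b k)) = fun k => f (a k) := by
    funext k
    rw [← hhom, hab k]
  rw [heq1] at hmul1
  have hp1 : p = p * f zeroE := tendsto_nhds_unique hpa hmul1
  have hmul2 : Filter.Tendsto (fun k => f (a k) * f zeroE) (F : Filter ℕ) (𝓝 (p * f zeroE)) :=
    hpa.mul tendsto_const_nhds
  have heq2 : (fun k => f (a k) * f zeroE) = fun _ => f zeroE := by
    funext k
    rw [← hhom, haz k]
  rw [heq2] at hmul2
  have hp2 : f zeroE = p * f zeroE := tendsto_nhds_unique tendsto_const_nhds hmul2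
  have hpz : p = f zeroE := hp1.trans hp2.symm
  rw [hpz] at hpa
  have hatend : Filter.Tendsto a (F : Filter ℕ) (𝓝 zeroE) := hemb.tendsto_nhds_iff.2 hpa
  have hmem : a ⁻¹' ExB 1 ∈ (F : Filter ℕ) :=
    hatend ((isOpen_B one_pos).mem_nhds (zeroE_mem_B 1))
  have hempty : a ⁻¹' ExB 1 = ∅ := by
    ext k
    simp only [Set.mem_preimage, Set.mem_empty_iff_false, iff_false]
    exact oddE_notMem_B (k+1) 1
  rw [hempty] at hmem
  exact Filter.empty_notMem _ hmem

end ExAux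

/-- There exists a topological semilattice (namely `E = {0} ∪ {1/n : n ∈ ℕ}` with the
operation `min`, all non-zero points isolated, and the sets
`B n = {0} ∪ {1/(2k) : k ≥ n}` forming a neighborhood base at `0`) which is countable,
locally compact, Lawson and metrizable, but neither metrizable by a subinvariant
metric nor precompact. -/
theorem exSemilattice_properties :
    Countable ExSemilattice ∧
    -- `E` is a (Hausdorff) topological semilattice:
    T2Space ExSemilattice ∧
    Continuous (fun p : ExSemilattice × ExSemilattice => p.1 * p.2) ∧
    -- `E` is locally compact:
    LocallyCompactSpace ExSemilattice ∧
    -- `E` is Lawson: open subsemilattices form a base of its topology: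
    (∀ U : Set ExSemilattice, IsOpen U → ∀ x ∈ U, ∃ L : Set ExSemilattice,
      IsOpen L ∧ (∀ a ∈ L, ∀ b ∈ L, a * b ∈ L) ∧ x ∈ L ∧ L ⊆ U) ∧
    -- `E` is metrizable:
    (∃ d : ExSemilattice → ExSemilattice → ℝ, IsCompatibleMetric d) ∧
    -- `E` is not metrizable by a subinvariant metric:
    ¬(∃ d : ExSemilattice → ExSemilattice → ℝ, IsCompatibleMetric d ∧
        ∀ x y z : ExSemilattice, d (z * x) (z * y) ≤ d x y) ∧
    -- `E` is not precompact:
    ¬IsPrecompactSemigroup ExSemilattice := by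
  refine ⟨ExAux.countableE, inferInstance, ExAux.continuous_min, inferInstance,
    ?_, ⟨ExAux.dE, ExAux.dE_compatible⟩, ExAux.not_subinvariant, ExAux.not_precompact⟩
  intro U hU x hx
  by_cases hx0 : x.val = 0
  · rcases ExAux.eq_zeroE hx0
    obtain ⟨n, hn, hBn⟩ := ExAux.exists_B_subset hU hx
    exact ⟨ExB n, ExAux.isOpen_B hn, fun a ha b hb => ExAux.min_mem_B ha hb,
      ExAux.zeroE_mem_B n, hBn⟩
  · refine ⟨{x}, ExAux.isOpen_singleton hx0, ?_, rfl, Set.singleton_subset_iff.2 hx⟩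
    intro a ha b hb
    rw [Set.mem_singleton_iff] at ha hb
    subst ha; subst hb
    simp only [Set.mem_singleton_iff, ExAux.mul_def, min_self]
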